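/- Let (W, S) be a Coxeter system, ε : W → W an automorphism, J, J' ⊆ S with ε(J) = J', and (J_n, J'_n, u_n)_{n≥0} an element of S(J, ε). Then for every n ≥ 0, the product u_0 u_1 ⋯ u_n lies in Wᴶⁿ, i.e. it is a minimal length representative of its left coset modulo W_{J_n}. -/

import Mathlib

/-!
The minimal representative `w ∈ Wᴷ` of a coset `w W_K` satisfies `ℓ (w x) = ℓ w + ℓ x` for
all `x ∈ W_K`; hence `Wᴷ · (W_K ∩ Wᴷ') ⊆ Wᴷ'` whenever `K' ⊆ K`, and the theorem follows by
induction on `n`, since `u_{n+1} ∈ W_{J_n} ∩ W^{J_{n+1}}` and `J_{n+1} ⊆ J_n`.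

For the additivity, let `η w t ∈ ZMod 2` be the parity of the number of occurrences of `t` in the
right inversion sequence of a word for `w`; it is well defined because it is read off Tits'
permutation representation of `W` on `W × ZMod 2`. It detects right inversions and satisfies
`η (w x) s = η x s + η w (x s x⁻¹)`. Minimality of `w` in `w W_K` makes `η w` vanish on `W_K`,
so `w x` and `x` have the same right descents in `K`, and `ℓ (w x) - ℓ x` is constant on `W_K`.
-/

namespace Lusztig

variable {B : Type*} {W : Type*} [Group W] {M : CoxeterMatrix B}

/-- The standard parabolic subgroup `W_K` generated by the simple reflections in `K`. -/
def WP (cs : CoxeterSystem M W) (K : Set B) : Subgroup W :=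
  Subgroup.closure (cs.simple '' K)

/-- `w` is the unique minimal length element of its left coset `W_K w`
(i.e. `w ∈ ᴷW`). -/
def IsMinL (cs : CoxeterSystem M W) (K : Set B) (w : W) : Prop :=
  ∀ a ∈ WP cs K, a * w ≠ w → cs.length w < cs.length (a * w)

/-- `w` is the unique minimal length element of its right coset `w W_K`
(i.e. `w ∈ Wᴷ`). -/
def IsMinR (cs : CoxeterSystem M W) (K : Set B) (w : W) : Prop :=
  ∀ b ∈ WP cs K, w * b ≠ w → cs.length w < cs.length (w * b)

/-- `x` is the unique minimal length element of its double coset `W_K x W_{K'}`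
(i.e. `x ∈ ᴷWᴷ'`). -/
def IsMinDC (cs : CoxeterSystem M W) (K K' : Set B) (x : W) : Prop :=
  ∀ a ∈ WP cs K, ∀ b ∈ WP cs K', a * x * b ≠ x → cs.length x < cs.length (a * x * b)

/-- `x` is the unique minimal length element of the double coset `W_K g W_{K'}`. -/
def IsMinOf (cs : CoxeterSystem M W) (K K' : Set B) (g x : W) : Prop :=
  (∃ a ∈ WP cs K, ∃ b ∈ WP cs K', x = a * g * b) ∧
  ∀ a ∈ WP cs K, ∀ b ∈ WP cs K', a * g * b ≠ x → cs.length x < cs.length (a * g * b)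

/-- `Ad(x)J ∩ S`, as a set of indices of simple reflections:
the set of `s` with `simple s = x * (simple t) * x⁻¹` for some `t ∈ J`. -/
def AdSet (cs : CoxeterSystem M W) (x : W) (J : Set B) : Set B :=
  {s | ∃ t ∈ J, cs.simple s = x * cs.simple t * x⁻¹}

/-- The product `u 0 * u 1 * ⋯ * u (n-1)`. -/
def pr (u : ℕ → W) (n : ℕ) : W := ((List.range n).map u).prod

/-- Lusztig's set `S(J, ε)` (2.3): sequences `(J_n, J'_n, u_n)` with
`J = J_0 ⊇ J_1 ⊇ ⋯`, `ε(J_n) = ε(J_{n-1}) ∩ Ad(u_0⋯u_{n-1})J_{n-1}` (n ≥ 1),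
`J'_0 = ε(J) = J'`, `J'_n = J_{n-1} ∩ Ad(u_0⋯u_{n-1})⁻¹ε(J_{n-1})` (n ≥ 1),
`u_n ∈ W_{J_{n-1}}` (n ≥ 1), `u_n ∈ {}^{J'_n}W ∩ W^{J_n}` (n ≥ 0).
Here `ε` is encoded by its restriction `f : B ≃ B` to the simple reflections. -/
structure SSeq (cs : CoxeterSystem M W) (f : B ≃ B) (J : Set B) where
  Jn : ℕ → Set B
  J'n : ℕ → Set B
  u : ℕ → W
  hJ0 : Jn 0 = J
  hJ'0 : J'n 0 = f '' J
  hmono : ∀ n, Jn (n + 1) ⊆ Jn n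
  hb : ∀ n, f '' Jn (n + 1) = (f '' Jn n) ∩ AdSet cs (pr u (n + 1)) (Jn n)
  hc : ∀ n, J'n (n + 1) = Jn n ∩ AdSet cs (pr u (n + 1))⁻¹ (f '' Jn n)
  hd : ∀ n, u (n + 1) ∈ WP cs (Jn n)
  he : ∀ n, IsMinL cs (J'n n) (u n) ∧ IsMinR cs (Jn n) (u n)

/-- Lusztig's set `T(J, ε)` (2.2): sequences `(J_n, w_n)` with
`J = J_0 ⊇ J_1 ⊇ ⋯`, `J_n = J_{n-1} ∩ ε⁻¹(Ad(w_{n-1})J_{n-1})` (n ≥ 1),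
`w_n ∈ {}^{ε(J_n)}W^{J_n}` (n ≥ 0), `w_n ∈ W_{ε(J_n)} w_{n-1} W_{J_{n-1}}` (n ≥ 1). -/
structure TSeq (cs : CoxeterSystem M W) (f : B ≃ B) (J : Set B) where
  Jn : ℕ → Set B
  w : ℕ → W
  hJ0 : Jn 0 = J
  hmono : ∀ n, Jn (n + 1) ⊆ Jn n
  hb : ∀ n, Jn (n + 1) = Jn n ∩ f.symm '' AdSet cs (w n) (Jn n)
  hc : ∀ n, IsMinDC cs (f '' Jn n) (Jn n) (w n)
  hd : ∀ n, ∃ a ∈ WP cs (f '' Jn (n + 1)), ∃ b ∈ WP cs (Jn n), w (n + 1) = a * w n * b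

section ReflectionRepresentation

open Classical

variable (cs : CoxeterSystem M W)

noncomputable def simplePerm (i : B) : Equiv.Perm (W × ZMod 2) :=
  Function.Involutive.toPerm
    (fun p => (cs.simple i * p.1 * cs.simple i, p.2 + if p.1 = cs.simple i then 1 else 0))
    (by
      rintro ⟨t, e⟩
      have hiff : cs.simple i * t * cs.simple i = cs.simple i ↔ t = cs.simple i := by
        simp [mul_eq_one_iff_eq_inv']
      ext
      · simp [mul_assoc]
      · by_cases h : t = cs.simple i <;> simp [hiff, h, add_assoc, CharTwo.add_self_eq_zero])

@[simp]
lemma simplePerm_apply (i : B) (t : W) (e : ZMod 2) :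
    simplePerm cs i (t, e) =
      (cs.simple i * t * cs.simple i, e + if t = cs.simple i then 1 else 0) := rfl

lemma simple_mul_pow (i j : B) (n : ℕ) :
    cs.simple j * (cs.simple i * cs.simple j) ^ n
      = (cs.simple i * cs.simple j)⁻¹ ^ n * cs.simple j := by
  induction n with
  | zero => simp
  | succ n ih =>
    rw [pow_succ, ← mul_assoc, ih, pow_succ, mul_assoc, mul_assoc]
    simp [mul_assoc]

lemma simplePerm_mul_pow_apply (i j : B) (n : ℕ) (t : W) (e : ZMod 2) :
    ((simplePerm cs i * simplePerm cs j) ^ n) (t, e) =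
      ((cs.simple i * cs.simple j) ^ n * t * ((cs.simple i * cs.simple j) ^ n)⁻¹,
        e + ∑ a ∈ Finset.range (2 * n),
          if t = (cs.simple i * cs.simple j)⁻¹ ^ a * cs.simple j then 1 else 0) := by
  set P := cs.simple i * cs.simple j
  induction n with
  | zero => simp
  | succ n ih =>
    have hstep_j : P ^ n * t * (P ^ n)⁻¹ = cs.simple j ↔
        t = P⁻¹ ^ (2 * n) * cs.simple j := by
      rw [← eq_mul_inv_iff_mul_eq, ← eq_inv_mul_iff_mul_eq, inv_inv, simple_mul_pow,
        ← inv_pow, ← mul_assoc, ← pow_add, two_mul]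
    have hstep_i : cs.simple j * (P ^ n * t * (P ^ n)⁻¹) * cs.simple j = cs.simple i ↔
        t = P⁻¹ ^ (2 * n + 1) * cs.simple j := by
      have hP : P⁻¹ * cs.simple j = cs.simple j * P := by
        simp [P, mul_assoc]
      rw [← eq_mul_inv_iff_mul_eq, ← eq_inv_mul_iff_mul_eq, cs.inv_simple, ← hP,
        ← eq_mul_inv_iff_mul_eq, ← eq_inv_mul_iff_mul_eq, inv_inv, mul_assoc,
        simple_mul_pow, ← inv_pow, ← mul_assoc, ← mul_assoc, ← pow_succ, ← pow_add,
        show n + 1 + n = 2 * n + 1 by ring]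
    rw [pow_succ', Equiv.Perm.mul_apply, ih, Equiv.Perm.mul_apply, simplePerm_apply,
      simplePerm_apply, show 2 * (n + 1) = 2 * n + 1 + 1 by ring, Finset.sum_range_succ,
      Finset.sum_range_succ, hstep_j, hstep_i]
    ext
    · simp only [P, pow_succ', mul_inv_rev, cs.inv_simple, mul_assoc]
    · simp only; ring

lemma isLiftable_simplePerm : M.IsLiftable (simplePerm cs) := by
  -- the reflections `(s j * s i) ^ a * s j`, `a < 2 m`, repeat with period `m = M i j`
  intro i j
  ext ⟨t, e⟩ : 1
  have hP : (cs.simple i * cs.simple j) ^ M i j = 1 := cs.simple_mul_simple_pow i j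
  have hperiodic : ∀ a, (cs.simple i * cs.simple j)⁻¹ ^ (M i j + a) =
      (cs.simple i * cs.simple j)⁻¹ ^ a := by
    simp only [inv_pow, pow_add, hP, one_mul, inv_one, implies_true]
  rw [simplePerm_mul_pow_apply, two_mul, Finset.sum_range_add]
  simp only [hperiodic, hP, one_mul, mul_one, inv_one, CharTwo.add_self_eq_zero, add_zero,
    Equiv.Perm.one_apply]

noncomputable def reflectionRep : W →* Equiv.Perm (W × ZMod 2) :=
  cs.lift ⟨simplePerm cs, isLiftable_simplePerm cs⟩

lemma reflectionRep_simple (i : B) : reflectionRep cs (cs.simple i) = simplePerm cs i :=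
  cs.lift_apply_simple _ i

noncomputable def inversionParity (w t : W) : ZMod 2 := (reflectionRep cs w (t, 0)).2

lemma reflectionRep_apply (w t : W) (e : ZMod 2) :
    reflectionRep cs w (t, e) = (w * t * w⁻¹, e + inversionParity cs w t) := by
  induction w using cs.simple_induction_left generalizing t e with
  | one => simp [inversionParity]
  | mul_simple_left w i ih =>
    have hparity : inversionParity cs (cs.simple i * w) t =
        inversionParity cs w t + if w * t * w⁻¹ = cs.simple i then 1 else 0 := by
      rw [inversionParity, map_mul, Equiv.Perm.mul_apply, ih, reflectionRep_simple,
        simplePerm_apply, zero_add]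
    rw [map_mul, Equiv.Perm.mul_apply, ih, reflectionRep_simple, simplePerm_apply, hparity]
    ext
    · simp [mul_assoc]
    · simp [add_assoc]

lemma inversionParity_mul (u v t : W) :
    inversionParity cs (u * v) t =
      inversionParity cs v t + inversionParity cs u (v * t * v⁻¹) := by
  rw [inversionParity, map_mul, Equiv.Perm.mul_apply, reflectionRep_apply, reflectionRep_apply,
    zero_add]

lemma inversionParity_simple (i : B) (t : W) :
    inversionParity cs (cs.simple i) t = if t = cs.simple i then 1 else 0 := by
  rw [inversionParity, reflectionRep_simple, simplePerm_apply, zero_add]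

lemma mem_rightInvSeq_of_inversionParity_eq_one {ω : List B} {t : W}
    (h : inversionParity cs (cs.wordProd ω) t = 1) : t ∈ cs.rightInvSeq ω := by
  induction ω with
  | nil => simp [inversionParity] at h
  | cons i ω ih =>
    rw [cs.wordProd_cons, inversionParity_mul, inversionParity_simple] at h
    by_cases hc : cs.wordProd ω * t * (cs.wordProd ω)⁻¹ = cs.simple i
    · rw [← eq_mul_inv_iff_mul_eq, ← eq_inv_mul_iff_mul_eq, inv_inv] at hc
      simp [CoxeterSystem.rightInvSeq, hc, mul_assoc]
    · rw [if_neg hc, add_zero] at h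
      exact List.mem_cons_of_mem _ (ih h)

lemma inversionParity_one (t : W) : inversionParity cs 1 t = 0 := by
  rw [inversionParity, map_one, Equiv.Perm.one_apply]

lemma inversionParity_self {t : W} (ht : cs.IsReflection t) : inversionParity cs t t = 1 := by
  obtain ⟨x, i, rfl⟩ := ht
  have h₀ := inversionParity_mul cs x⁻¹ x (cs.simple i)
  have h₁ := inversionParity_mul cs (x * cs.simple i) x⁻¹ (x * cs.simple i * x⁻¹)
  have h₂ := inversionParity_mul cs x (cs.simple i) (cs.simple i)
  rw [show x⁻¹ * (x * cs.simple i * x⁻¹) * x⁻¹⁻¹ = cs.simple i by group] at h₁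
  simp only [inv_mul_cancel, inversionParity_one, inversionParity_simple, cs.inv_simple,
    cs.simple_mul_simple_cancel_right, if_true] at h₀ h₂
  rw [h₁, h₂]
  grind

lemma isRightInversion_of_inversionParity_eq_one {w t : W} (h : inversionParity cs w t = 1) :
    cs.IsRightInversion w t := by
  obtain ⟨ω, hω, rfl⟩ := cs.exists_isReduced w
  exact cs.isRightInversion_of_mem_rightInvSeq hω (mem_rightInvSeq_of_inversionParity_eq_one cs h)

theorem inversionParity_eq_one_iff {w t : W} :
    inversionParity cs w t = 1 ↔ cs.IsRightInversion w t := by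
  refine ⟨isRightInversion_of_inversionParity_eq_one cs, fun ⟨ht, hlt⟩ => ?_⟩
  by_contra hne
  have h₀ : inversionParity cs w t = 0 := (by decide : ∀ a : ZMod 2, a ≠ 1 → a = 0) _ hne
  have h₁ : inversionParity cs (w * t) t = 1 := by
    rw [inversionParity_mul, ht.mul_self, one_mul, ht.inv, inversionParity_self cs ht, h₀,
      add_zero]
  have h₂ := (isRightInversion_of_inversionParity_eq_one cs h₁).2
  rw [mul_assoc, ht.mul_self, mul_one] at h₂
  exact lt_asymm hlt h₂

end ReflectionRepresentation

section Parabolic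

variable (cs : CoxeterSystem M W) {K : Set B}

lemma WP_mono {K' : Set B} (h : K' ⊆ K) : WP cs K' ≤ WP cs K :=
  Subgroup.closure_mono (Set.image_mono h)

lemma simple_mem_WP {i : B} (hi : i ∈ K) : cs.simple i ∈ WP cs K :=
  Subgroup.subset_closure ⟨i, hi, rfl⟩

lemma not_isRightInversion_of_isMinR {w t : W} (hw : IsMinR cs K w) (ht : t ∈ WP cs K) :
    ¬cs.IsRightInversion w t := by
  rintro ⟨-, hlt⟩
  by_cases h : w * t = w
  · rw [h] at hlt
    exact lt_irrefl _ hlt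
  · exact lt_asymm hlt (hw t ht h)

lemma isRightDescent_mul_iff_of_isMinR {w x : W} (hw : IsMinR cs K w) (hx : x ∈ WP cs K)
    {i : B} (hi : i ∈ K) : cs.IsRightDescent (w * x) i ↔ cs.IsRightDescent x i := by
  have hconj : x * cs.simple i * x⁻¹ ∈ WP cs K :=
    mul_mem (mul_mem hx (simple_mem_WP cs hi)) (inv_mem hx)
  have h₀ : inversionParity cs w (x * cs.simple i * x⁻¹) = 0 :=
    (by decide : ∀ a : ZMod 2, a ≠ 1 → a = 0) _
      (mt (inversionParity_eq_one_iff cs).1 (not_isRightInversion_of_isMinR cs hw hconj))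
  simp only [← cs.isRightInversion_simple_iff_isRightDescent, ← inversionParity_eq_one_iff,
    inversionParity_mul, h₀, add_zero]

lemma length_mul_of_isMinR {w x : W} (hw : IsMinR cs K w) (hx : x ∈ WP cs K) :
    cs.length (w * x) = cs.length w + cs.length x := by
  have step : ∀ x ∈ WP cs K, ∀ i ∈ K, cs.length (w * x) = cs.length w + cs.length x →
      cs.length (w * x * cs.simple i) = cs.length w + cs.length (x * cs.simple i) := by
    intro x hx i hi ih
    have hdescent := isRightDescent_mul_iff_of_isMinR cs hw hx hi
    simp only [CoxeterSystem.IsRightDescent] at hdescent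
    rcases cs.length_mul_simple (w * x) i with h | h <;>
      rcases cs.length_mul_simple x i with h' | h' <;> omega
  induction hx using Subgroup.closure_induction_right with
  | one => simp
  | mul_right x hx _ hs ih =>
    obtain ⟨i, hi, rfl⟩ := hs
    rw [← mul_assoc]
    exact step x hx i hi ih
  | mul_inv_cancel x hx _ hs ih =>
    obtain ⟨i, hi, rfl⟩ := hs
    rw [← mul_assoc, cs.inv_simple]
    exact step x hx i hi ih

lemma isMinR_mul {K' : Set B} (hK' : K' ⊆ K) {w u : W} (hw : IsMinR cs K w)
    (hu : u ∈ WP cs K) (hu' : IsMinR cs K' u) : IsMinR cs K' (w * u) := by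
  intro b hb hne
  have hb' : u * b ≠ u := fun h => hne (by rw [mul_assoc, h])
  have hub : u * b ∈ WP cs K := mul_mem hu (WP_mono cs hK' hb)
  rw [mul_assoc, length_mul_of_isMinR cs hw hub, length_mul_of_isMinR cs hw hu]
  exact Nat.add_lt_add_left (hu' b hb hb') _

end Parabolic

lemma pr_succ (u : ℕ → W) (n : ℕ) : pr u (n + 1) = pr u n * u n := by
  simp [pr, List.range_succ]

theorem statement4_general (cs : CoxeterSystem M W) (f : B ≃ B) (J : Set B) (s : SSeq cs f J) :
    ∀ n, IsMinR cs (s.Jn n) (pr s.u (n + 1)) := by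
  intro n
  induction n with
  | zero => simpa [pr] using (s.he 0).2
  | succ n ih =>
    rw [pr_succ]
    exact isMinR_mul cs (s.hmono n) ih (s.hd n) (s.he (n + 1)).2

/-- 2.4(c): for `(J_n, J'_n, u_n) ∈ S(J, ε)` and every `n ≥ 0`, the product
`u_0 u_1 ⋯ u_n` is a minimal length representative of its left coset
modulo `W_{J_n}`, i.e. lies in `Wᴶⁿ`. -/
theorem statement4 (cs : CoxeterSystem M W) (f : B ≃ B) (e : W ≃* W)
    (hef : ∀ b, e (cs.simple b) = cs.simple (f b)) (J J' : Set B)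
    (hJ' : f '' J = J') (s : SSeq cs f J) :
    ∀ n, IsMinR cs (s.Jn n) (pr s.u (n + 1)) :=
  statement4_general cs f J s

end Lusztig
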